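/- arXiv:2211.05843 — 4 statements merged into one kernel-verified Lean document; each statement's English description precedes it below -/
import Mathlib

section
/- Let v be a TU game on 𝒜′ with κ-additive allocations: sup over nets (λ^i)_{i∈I} ⊆ ℝ₊^{(𝒜′)} with A(λ^i) → χ_N weakly and c(λ^i) → z of z is at most v(N), if and only if, sup over nets (λ^j)_{j∈J} ⊆ ℝ∗^{(𝒜′)} with A(λ^j) → χ_N weakly, c(λ^j) → z, and liminf λ^j_N > −∞, of z is at most v(N). Here ℝ∗^{(𝒜′)} allows the weight of the grand coalition N to be negative but all other weights nonnegative. -/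
/-!
A net of weight systems with `λ_N ≥ -m` eventually (`m ≥ 0`) is made nonnegative by adding `m`
to the weight of `N` and dividing all weights by `1 + m` (at the indices where the bound fails,
`m` is replaced by `-λ_N`; these are eventually absent). The shift adds `m χ_N` to `A(λ)`, so the
new net still balances, and its payoffs converge to `(z + m v(N)) / (1 + m)`, which is `≤ v(N)` iff
`z ≤ v(N)`. Conversely, a net of nonnegative weights has `λ_N ≥ 0`.
-/

open Filter Topology Set
open scoped Classical

section Defs

variable {N : Type}

/-- A field of sets over `N`. -/
def IsSetField (𝒜 : Set (Set N)) : Prop :=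
  Set.univ ∈ 𝒜 ∧ (∀ S ∈ 𝒜, Sᶜ ∈ 𝒜) ∧ ∀ S ∈ 𝒜, ∀ T ∈ 𝒜, S ∪ T ∈ 𝒜

/-- Finitely additive set function on `𝒜`. -/
def IsAdditiveOn (𝒜 : Set (Set N)) (μ : Set N → ℝ) : Prop :=
  μ ∅ = 0 ∧ ∀ S ∈ 𝒜, ∀ T ∈ 𝒜, Disjoint S T → μ (S ∪ T) = μ S + μ T

def IsBoundedOn (𝒜 : Set (Set N)) (μ : Set N → ℝ) : Prop :=
  ∃ M : ℝ, ∀ S ∈ 𝒜, |μ S| ≤ M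

/-- Upper κ-continuity: along every monotone decreasing κ-net with intersection `T ∈ 𝒜`,
`μ (S i) → μ T`. -/
def UpperKappaCont (𝒜 : Set (Set N)) (κ : Cardinal) (μ : Set N → ℝ) : Prop :=
  ∀ (I : Type) [Preorder I] [IsDirected I (· ≤ ·)] [Nonempty I],
    Cardinal.mk I ≤ κ → ∀ S : I → Set N, (∀ i, S i ∈ 𝒜) → Antitone S →
      ∀ T ∈ 𝒜, (⋂ i, S i) = T → Tendsto (fun i => μ (S i)) atTop (nhds (μ T))

/-- Lower κ-continuity: along every monotone increasing κ-net with union `T ∈ 𝒜`,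
`μ (S i) → μ T`. -/
def LowerKappaCont (𝒜 : Set (Set N)) (κ : Cardinal) (μ : Set N → ℝ) : Prop :=
  ∀ (I : Type) [Preorder I] [IsDirected I (· ≤ ·)] [Nonempty I],
    Cardinal.mk I ≤ κ → ∀ S : I → Set N, (∀ i, S i ∈ 𝒜) → Monotone S →
      ∀ T ∈ 𝒜, (⋃ i, S i) = T → Tendsto (fun i => μ (S i)) atTop (nhds (μ T))

def KappaCont (𝒜 : Set (Set N)) (κ : Cardinal) (μ : Set N → ℝ) : Prop :=
  UpperKappaCont 𝒜 κ μ ∧ LowerKappaCont 𝒜 κ μ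

/-- Membership in `ba^κ(𝒜)`: bounded, additive and κ-continuous. -/
def InBaKappa (𝒜 : Set (Set N)) (κ : Cardinal) (μ : Set N → ℝ) : Prop :=
  IsBoundedOn 𝒜 μ ∧ IsAdditiveOn 𝒜 μ ∧ KappaCont 𝒜 κ μ

/-- σ-additivity (countable additivity) of a set function on `𝒜`. -/
def IsSigmaAdditiveOn (𝒜 : Set (Set N)) (μ : Set N → ℝ) : Prop :=
  ∀ S : ℕ → Set N, (∀ n, S n ∈ 𝒜) → Pairwise (Function.onFun Disjoint S) →
    (⋃ n, S n) ∈ 𝒜 → HasSum (fun n => μ (S n)) (μ (⋃ n, S n))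

/-- Finitely supported weight system with support among the feasible coalitions. -/
def FinSuppOn (𝒜' : Set (Set N)) (lam : Set N → ℝ) : Prop :=
  (Function.support lam).Finite ∧ Function.support lam ⊆ 𝒜'

/-- The field hull (smallest field of sets containing `𝒜'`). -/
def FieldHull (𝒜' : Set (Set N)) : Set (Set N) :=
  ⋂₀ {ℬ : Set (Set N) | IsSetField ℬ ∧ 𝒜' ⊆ ℬ}

end Defs

section ShiftUnivWeight

variable {N : Type}

noncomputable def shiftUnivWeight (lam : Set N → ℝ) (m : ℝ) : Set N → ℝ :=
  fun S => (lam S + if S = univ then m else 0) / (1 + m)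

theorem finSuppOn_shiftUnivWeight {𝒜' : Set (Set N)} {lam : Set N → ℝ}
    (h : FinSuppOn 𝒜' lam) (hU : univ ∈ 𝒜') (m : ℝ) :
    FinSuppOn 𝒜' (shiftUnivWeight lam m) := by
  have hsub : Function.support (shiftUnivWeight lam m) ⊆ insert univ (Function.support lam) := by
    intro S hS
    by_cases hSU : S = univ
    · exact Or.inl hSU
    · right
      intro hlam
      simp [shiftUnivWeight, hSU, hlam] at hS
  exact ⟨(h.1.insert univ).subset hsub, hsub.trans (insert_subset hU h.2)⟩

theorem shiftUnivWeight_nonneg {lam : Set N → ℝ} {m : ℝ} (hm : 0 ≤ 1 + m)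
    (hlam : ∀ S, S ≠ univ → 0 ≤ lam S) (hlam_univ : -m ≤ lam univ) (S : Set N) :
    0 ≤ shiftUnivWeight lam m S := by
  unfold shiftUnivWeight
  by_cases hSU : S = univ
  · subst hSU
    simp only [if_true]
    exact div_nonneg (by linarith) hm
  · simp only [hSU, if_false, add_zero]
    exact div_nonneg (hlam S hSU) hm

theorem finsum_shiftUnivWeight_mul {lam : Set N → ℝ} (hlam : (Function.support lam).Finite)
    (m : ℝ) (f : Set N → ℝ) :
    ∑ᶠ S, shiftUnivWeight lam m S * f S = (∑ᶠ S, lam S * f S + m * f univ) / (1 + m) := by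
  have hsplit : (fun S => shiftUnivWeight lam m S * f S) =
      fun S => (1 + m)⁻¹ * (lam S * f S + (if S = univ then m else 0) * f S) := by
    funext S; simp only [shiftUnivWeight]; ring
  have hfin : (Function.support fun S => lam S * f S).Finite :=
    hlam.subset (Function.support_mul_subset_left _ _)
  have hfin_univ : (Function.support fun S => (if S = univ then m else 0) * f S).Finite :=
    (finite_singleton univ).subset fun S hS => by_contra fun hSU => hS (by simp_all)
  rw [hsplit, ← mul_finsum, finsum_add_distrib hfin hfin_univ,
    finsum_eq_single (fun S => (if S = univ then m else 0) * f S) univ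
      fun S hS => by rw [if_neg hS, zero_mul], if_pos rfl, div_eq_inv_mul]

theorem tendsto_finsum_shiftUnivWeight_mul {J : Type*} {l : Filter J} {lam : J → Set N → ℝ}
    {m : J → ℝ} {m₀ L : ℝ} (f : Set N → ℝ) (hlam : ∀ j, (Function.support (lam j)).Finite)
    (hm : m =ᶠ[l] fun _ => m₀) (hm₀ : 1 + m₀ ≠ 0)
    (hL : Tendsto (fun j => ∑ᶠ S, lam j S * f S) l (𝓝 L)) :
    Tendsto (fun j => ∑ᶠ S, shiftUnivWeight (lam j) (m j) S * f S) l
      (𝓝 ((L + m₀ * f univ) / (1 + m₀))) := by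
  have hm_lim : Tendsto m l (𝓝 m₀) := tendsto_const_nhds.congr' hm.symm
  simp only [finsum_shiftUnivWeight_mul (hlam _)]
  exact (hL.add (hm_lim.mul_const _)).div (tendsto_const_nhds.add hm_lim) hm₀

end ShiftUnivWeight

theorem schmeidlerKappaBalanced_iff_boundedBelowVersion_general {N : Type}
    (𝒜' : Set (Set N)) (hU : Set.univ ∈ 𝒜')
    (κ : Cardinal)
    (v : Set N → ℝ) :
    (∀ z : ℝ,
      (∃ (I : Type) (_ : Preorder I) (_ : IsDirected I (· ≤ ·)) (_ : Nonempty I)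
          (lam : I → Set N → ℝ),
        (∀ i, FinSuppOn 𝒜' (lam i)) ∧ (∀ i S, 0 ≤ lam i S) ∧
        (∀ μ : Set N → ℝ, InBaKappa (FieldHull 𝒜') κ μ →
          Tendsto (fun i => ∑ᶠ S, lam i S * μ S) atTop (nhds (μ Set.univ))) ∧
        Tendsto (fun i => ∑ᶠ S, lam i S * v S) atTop (nhds z)) → z ≤ v Set.univ)
    ↔
    (∀ z : ℝ,
      (∃ (J : Type) (_ : Preorder J) (_ : IsDirected J (· ≤ ·)) (_ : Nonempty J)
          (lam : J → Set N → ℝ),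
        (∀ j, FinSuppOn 𝒜' (lam j)) ∧ (∀ j S, S ≠ Set.univ → 0 ≤ lam j S) ∧
        (∀ μ : Set N → ℝ, InBaKappa (FieldHull 𝒜') κ μ →
          Tendsto (fun j => ∑ᶠ S, lam j S * μ S) atTop (nhds (μ Set.univ))) ∧
        Tendsto (fun j => ∑ᶠ S, lam j S * v S) atTop (nhds z) ∧
        (∃ B : ℝ, ∀ᶠ j in atTop, B ≤ lam j Set.univ)) → z ≤ v Set.univ) := by
  constructor
  · rintro H z ⟨J, _, _, _, lam, hfin, hpos, hμ, hv, B, hB⟩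
    set m := max 0 (-B)
    have hm0 : 0 ≤ m := le_max_left _ _
    have hm1 : 0 < 1 + m := by linarith
    have hm : (fun j => max m (-lam j univ)) =ᶠ[atTop] fun _ => m :=
      hB.mono fun j hj => max_eq_left (by linarith [le_max_right 0 (-B)])
    have hsupp : ∀ j, (Function.support (lam j)).Finite := fun j => (hfin j).1
    have hshifted := H ((z + m * v univ) / (1 + m))
      ⟨J, inferInstance, inferInstance, inferInstance,
      fun j => shiftUnivWeight (lam j) (max m (-lam j univ)),
      fun j => finSuppOn_shiftUnivWeight (hfin j) hU _,
      fun j => shiftUnivWeight_nonneg (by linarith [le_max_left m (-lam j univ)]) (hpos j)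
        (neg_le.1 (le_max_right _ _)),
      fun μ hμ' => by
        convert tendsto_finsum_shiftUnivWeight_mul μ hsupp hm hm1.ne' (hμ μ hμ') using 2
        field_simp,
      tendsto_finsum_shiftUnivWeight_mul v hsupp hm hm1.ne' hv⟩
    rw [div_le_iff₀ hm1] at hshifted
    linarith
  · rintro H z ⟨I, _, _, _, lam, hfin, hpos, hμ, hv⟩
    exact H z ⟨I, inferInstance, inferInstance, inferInstance, lam, hfin,
      fun i S _ => hpos i S, hμ, hv, 0, Eventually.of_forall fun i => hpos i univ⟩

/-- Lemma 4.8 of the paper: the supremum over nets of nonnegative balancing weight systems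
is at most v(N) iff the supremum over nets of weight systems whose grand-coalition weight may
be negative but has liminf > −∞ is at most v(N). Weak convergence is with respect to
ba^κ(𝒜), where 𝒜 is the field hull of 𝒜'. -/
theorem schmeidlerKappaBalanced_iff_boundedBelowVersion {N : Type} [Nonempty N]
    (𝒜' : Set (Set N)) (h0 : ∅ ∈ 𝒜') (hU : Set.univ ∈ 𝒜')
    (κ : Cardinal) (hκ : Cardinal.aleph0 ≤ κ)
    (v : Set N → ℝ) (hv : v ∅ = 0) :
    (∀ z : ℝ,
      (∃ (I : Type) (_ : Preorder I) (_ : IsDirected I (· ≤ ·)) (_ : Nonempty I)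
          (lam : I → Set N → ℝ),
        (∀ i, FinSuppOn 𝒜' (lam i)) ∧ (∀ i S, 0 ≤ lam i S) ∧
        (∀ μ : Set N → ℝ, InBaKappa (FieldHull 𝒜') κ μ →
          Tendsto (fun i => ∑ᶠ S, lam i S * μ S) atTop (nhds (μ Set.univ))) ∧
        Tendsto (fun i => ∑ᶠ S, lam i S * v S) atTop (nhds z)) → z ≤ v Set.univ)
    ↔
    (∀ z : ℝ,
      (∃ (J : Type) (_ : Preorder J) (_ : IsDirected J (· ≤ ·)) (_ : Nonempty J)
          (lam : J → Set N → ℝ),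
        (∀ j, FinSuppOn 𝒜' (lam j)) ∧ (∀ j S, S ≠ Set.univ → 0 ≤ lam j S) ∧
        (∀ μ : Set N → ℝ, InBaKappa (FieldHull 𝒜') κ μ →
          Tendsto (fun j => ∑ᶠ S, lam j S * μ S) atTop (nhds (μ Set.univ))) ∧
        Tendsto (fun j => ∑ᶠ S, lam j S * v S) atTop (nhds z) ∧
        (∃ B : ℝ, ∀ᶠ j in atTop, B ≤ lam j Set.univ)) → z ≤ v Set.univ) :=
  schmeidlerKappaBalanced_iff_boundedBelowVersion_general 𝒜' hU κ v
end

section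
/- For any game v on 𝒜′, the κ-core of v is nonempty if and only if v is κ-balanced; that is, there exists a bounded κ-additive set function μ on the field 𝒜 generated by 𝒜′ with μ(N) = v(N) and μ(S) ≥ v(S) for all S ∈ 𝒜′, if and only if for every z ∈ ℝ with (χ_N, z) in the weak closure of the cone K_v = {(Σ_S λ_S χ_S, Σ_S λ_S v(S)) : λ ∈ ℝ∗^{(𝒜′)}}, one has z ≤ v(N). -/
open Filter Topology Set
open scoped Classical

section Helpers

variable {N : Type}

lemma support_mul_left_subset (l w : Set N → ℝ) :
    Function.support (fun S => l S * w S) ⊆ Function.support l := by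
  intro S hS
  simp only [Function.mem_support] at hS ⊢
  intro h; apply hS; rw [h]; ring

lemma finsum_mul_eq_sum (l w : Set N → ℝ) {s : Finset (Set N)}
    (h : Function.support l ⊆ ↑s) :
    ∑ᶠ S, l S * w S = ∑ S ∈ s, l S * w S :=
  finsum_eq_sum_of_support_subset _ ((support_mul_left_subset l w).trans h)

lemma finsum_mul_single (S : Set N) (c : ℝ) (w : Set N → ℝ) :
    ∑ᶠ T, (if T = S then c else 0) * w T = c * w S := by
  rw [finsum_eq_single _ S (by intro T hT; simp [hT])]
  simp

lemma finsum_mul_comb (a b : ℝ) (l1 l2 w : Set N → ℝ)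
    (h1 : (Function.support l1).Finite) (h2 : (Function.support l2).Finite) :
    ∑ᶠ S, (a * l1 S + b * l2 S) * w S
      = a * ∑ᶠ S, l1 S * w S + b * ∑ᶠ S, l2 S * w S := by
  classical
  set s : Finset (Set N) := (h1.union h2).toFinset with hs
  have hs1 : Function.support l1 ⊆ ↑s := by
    rw [hs]; intro x hx; simp [Set.Finite.mem_toFinset]; left; exact hx
  have hs2 : Function.support l2 ⊆ ↑s := by
    rw [hs]; intro x hx; simp [Set.Finite.mem_toFinset]; right; exact hx
  have hs3 : Function.support (fun S => a * l1 S + b * l2 S) ⊆ ↑s := by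
    intro x hx
    simp only [Function.mem_support] at hx
    by_contra hxs
    have hx1 : l1 x = 0 := Function.notMem_support.1 (fun h => hxs (hs1 h))
    have hx2 : l2 x = 0 := Function.notMem_support.1 (fun h => hxs (hs2 h))
    apply hx; rw [hx1, hx2]; ring
  rw [finsum_mul_eq_sum _ w hs3, finsum_mul_eq_sum _ w hs1, finsum_mul_eq_sum _ w hs2,
    Finset.mul_sum, Finset.mul_sum, ← Finset.sum_add_distrib]
  apply Finset.sum_congr rfl
  intro x _; ring

lemma finsum_mul_smul (a : ℝ) (l w : Set N → ℝ) (h : (Function.support l).Finite) :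
    ∑ᶠ S, (a * l S) * w S = a * ∑ᶠ S, l S * w S := by
  have := finsum_mul_comb a 0 l 0 w h (by simp)
  simpa using this

lemma inBaKappa_sum {𝒜 : Set (Set N)} {κ : Cardinal} {ι : Type} (s : Finset ι)
    (c : ι → ℝ) (m : ι → Set N → ℝ) (hm : ∀ j ∈ s, InBaKappa 𝒜 κ (m j)) :
    InBaKappa 𝒜 κ (fun T => ∑ j ∈ s, c j * m j T) := by
  classical
  refine ⟨?_, ⟨?_, ?_⟩, ?_, ?_⟩
  · choose M hM using fun j (hj : j ∈ s) => (hm j hj).1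
    refine ⟨∑ j ∈ s.attach, |c j.1| * M j.1 j.2, fun S hS => ?_⟩
    calc |∑ j ∈ s, c j * m j S| = |∑ j ∈ s.attach, c j.1 * m j.1 S| := by
          rw [Finset.sum_attach s (fun j => c j * m j S)]
      _ ≤ ∑ j ∈ s.attach, |c j.1 * m j.1 S| := Finset.abs_sum_le_sum_abs _ _
      _ ≤ ∑ j ∈ s.attach, |c j.1| * M j.1 j.2 := by
          apply Finset.sum_le_sum
          intro j _
          rw [abs_mul]
          exact mul_le_mul_of_nonneg_left (hM j.1 j.2 S hS) (abs_nonneg _)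
  · have : ∀ j ∈ s, c j * m j (∅ : Set N) = 0 := by
      intro j hj; rw [(hm j hj).2.1.1]; ring
    show ∑ j ∈ s, c j * m j (∅ : Set N) = 0
    rw [Finset.sum_congr rfl this]; simp
  · intro S hS T hT hd
    show ∑ j ∈ s, c j * m j (S ∪ T) = (∑ j ∈ s, c j * m j S) + ∑ j ∈ s, c j * m j T
    rw [← Finset.sum_add_distrib]
    apply Finset.sum_congr rfl
    intro j hj
    rw [(hm j hj).2.1.2 S hS T hT hd]; ring
  · intro I _ _ _ hI S hSmem hanti T hT hiT
    apply tendsto_finset_sum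
    intro j hj
    exact ((hm j hj).2.2.1 I hI S hSmem hanti T hT hiT).const_mul (c j)
  · intro I _ _ _ hI S hSmem hmono T hT hiT
    apply tendsto_finset_sum
    intro j hj
    exact ((hm j hj).2.2.2 I hI S hSmem hmono T hT hiT).const_mul (c j)

lemma inBaKappa_const_mul {𝒜 : Set (Set N)} {κ : Cardinal} (a : ℝ) {m : Set N → ℝ}
    (hm : InBaKappa 𝒜 κ m) : InBaKappa 𝒜 κ (fun T => a * m T) := by
  have := inBaKappa_sum (ι := Unit) {()} (fun _ => a) (fun _ => m) (fun _ _ => hm)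
  simpa using this

lemma clm_pi_repr {ι : Type} (g : ((ι → ℝ) →L[ℝ] ℝ)) :
    ∃ (J : Finset ι) (cf : ι → ℝ), ∀ h : ι → ℝ, g h = ∑ j ∈ J, h j * cf j := by
  classical
  have hcont : (⇑g) ⁻¹' Metric.ball (0 : ℝ) 1 ∈ 𝓝 (0 : ι → ℝ) := by
    have hc : Tendsto (⇑g) (𝓝 (0 : ι → ℝ)) (𝓝 (0 : ℝ)) := by
      have := g.continuous.continuousAt (x := (0 : ι → ℝ))
      rwa [ContinuousAt, map_zero] at this
    exact hc (Metric.ball_mem_nhds 0 one_pos)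
  rw [nhds_pi] at hcont
  obtain ⟨I, hIfin, t, ht, hsub⟩ := Filter.mem_pi.1 hcont
  have hker : ∀ r : ι → ℝ, (∀ j ∈ I, r j = 0) → g r = 0 := by
    intro r hr
    by_contra hgr
    have hb : ∀ n : ℝ, |n * g r| < 1 := by
      intro n
      have hmem : (n • r) ∈ I.pi t := by
        intro j hj
        have hz : (n • r) j = 0 := by simp [hr j hj]
        rw [hz]
        exact mem_of_mem_nhds (ht j)
      have := hsub hmem
      rw [abs_mul]
      simpa [Real.dist_eq, map_smul, smul_eq_mul] using this
    have h2 := hb (2 / |g r|)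
    rw [abs_mul, abs_div] at h2
    have hgr' : 0 < |g r| := abs_pos.2 hgr
    rw [abs_abs, abs_two, div_mul_cancel₀ _ (ne_of_gt hgr')] at h2
    linarith
  refine ⟨hIfin.toFinset, fun j => g (Pi.single j 1), fun h => ?_⟩
  set p : ι → ℝ := fun j => if j ∈ I then h j else 0 with hp
  set r : ι → ℝ := fun j => if j ∈ I then 0 else h j with hrdef
  have hhr : h = p + r := by
    funext j; by_cases hj : j ∈ I <;> simp [hp, hrdef, hj]
  have hpsum : p = ∑ j ∈ hIfin.toFinset, h j • (Pi.single j (1 : ℝ) : ι → ℝ) := by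
    funext j'
    rw [Finset.sum_apply]
    simp only [Pi.smul_apply]
    by_cases hj' : j' ∈ I
    · have : ∀ j ∈ hIfin.toFinset, h j • ((Pi.single j (1:ℝ) : ι → ℝ) j')
          = if j = j' then h j else 0 := by
        intro j _
        by_cases hjj : j = j' <;> simp [Pi.single_apply, hjj, eq_comm]
      rw [Finset.sum_congr rfl this, Finset.sum_ite_eq']
      simp [hp, hj', hIfin.mem_toFinset.2 hj']
    · have : ∀ j ∈ hIfin.toFinset, h j • ((Pi.single j (1:ℝ) : ι → ℝ) j') = 0 := by
        intro j hj
        have : j ≠ j' := fun e => hj' (e ▸ hIfin.mem_toFinset.1 hj)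
        simp [Pi.single_apply, this.symm]
      rw [Finset.sum_congr rfl this]
      simp [hp, hj']
  have hgh : g h = g p + g r := by rw [hhr, map_add]
  rw [hgh, hker r (fun j hj => by simp [hrdef, hj]), add_zero, hpsum, map_sum]
  apply Finset.sum_congr rfl
  intro j _
  rw [map_smul, smul_eq_mul]

structure DirIdx {α : Type} (F : Filter α) : Type where
  carrier : Set α
  mem_filter : carrier ∈ F

instance {α : Type} {F : Filter α} : Preorder (DirIdx F) where
  le U V := V.carrier ⊆ U.carrier
  le_refl U := subset_rfl
  le_trans U V W h1 h2 := fun x hx => h1 (h2 hx)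

instance {α : Type} {F : Filter α} : IsDirected (DirIdx F) (· ≤ ·) :=
  ⟨fun U V => ⟨⟨U.carrier ∩ V.carrier, Filter.inter_mem U.mem_filter V.mem_filter⟩,
    fun x hx => hx.1, fun x hx => hx.2⟩⟩

instance {α : Type} {F : Filter α} : Nonempty (DirIdx F) :=
  ⟨⟨Set.univ, Filter.univ_mem⟩⟩

lemma DirIdx.le_def {α : Type} {F : Filter α} {U V : DirIdx F} :
    U ≤ V ↔ V.carrier ⊆ U.carrier := Iff.rfl

end Helpers

section Cone

variable {N : Type}

abbrev BAk (𝒜' : Set (Set N)) (κ : Cardinal) : Type :=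
  {μ : Set N → ℝ // InBaKappa (FieldHull 𝒜') κ μ}

noncomputable def embK (𝒜' : Set (Set N)) (κ : Cardinal) (v : Set N → ℝ) (lam : Set N → ℝ) :
    (BAk 𝒜' κ → ℝ) × ℝ :=
  (fun μ => ∑ᶠ S, lam S * μ.1 S, ∑ᶠ S, lam S * v S)

def coneK (𝒜' : Set (Set N)) (κ : Cardinal) (v : Set N → ℝ) :
    Set ((BAk 𝒜' κ → ℝ) × ℝ) :=
  {p | ∃ lam : Set N → ℝ, FinSuppOn 𝒜' lam ∧ (∀ S, S ≠ Set.univ → 0 ≤ lam S) ∧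
    embK 𝒜' κ v lam = p}

lemma zero_mem_coneK (𝒜' : Set (Set N)) (κ : Cardinal) (v : Set N → ℝ) :
    (0 : (BAk 𝒜' κ → ℝ) × ℝ) ∈ coneK 𝒜' κ v := by
  refine ⟨0, ⟨by simp, by simp⟩, fun S _ => le_refl 0, ?_⟩
  unfold embK
  refine Prod.ext ?_ ?_
  · funext μ; simp
  · simp

lemma coneK_convex (𝒜' : Set (Set N)) (κ : Cardinal) (v : Set N → ℝ) :
    Convex ℝ (coneK 𝒜' κ v) := by
  rintro p ⟨l1, hf1, hp1, rfl⟩ q ⟨l2, hf2, hp2, rfl⟩ a b ha hb hab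
  refine ⟨fun S => a * l1 S + b * l2 S, ⟨?_, ?_⟩, ?_, ?_⟩
  · apply Set.Finite.subset (hf1.1.union hf2.1)
    intro S hS
    simp only [Function.mem_support] at hS
    by_contra hc
    simp only [Set.mem_union, Function.mem_support, not_or, not_not] at hc
    apply hS; rw [hc.1, hc.2]; ring
  · intro S hS
    simp only [Function.mem_support] at hS
    by_cases h1 : l1 S = 0
    · by_cases h2 : l2 S = 0
      · exact absurd (by rw [h1, h2]; ring) hS
      · exact hf2.2 h2
    · exact hf1.2 h1
  · intro S hS
    have := hp1 S hS
    have := hp2 S hS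
    positivity
  · unfold embK
    refine Prod.ext ?_ ?_
    · funext μ
      simp only [Prod.fst_add, Prod.smul_fst, Pi.add_apply, Pi.smul_apply, smul_eq_mul]
      exact finsum_mul_comb a b l1 l2 μ.1 hf1.1 hf2.1
    · simp only [Prod.snd_add, Prod.smul_snd, smul_eq_mul]
      exact finsum_mul_comb a b l1 l2 v hf1.1 hf2.1

lemma coneK_smul (𝒜' : Set (Set N)) (κ : Cardinal) (v : Set N → ℝ)
    {p : (BAk 𝒜' κ → ℝ) × ℝ} (t : ℝ) (ht : 0 ≤ t) (hp : p ∈ coneK 𝒜' κ v) :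
    t • p ∈ coneK 𝒜' κ v := by
  obtain ⟨l, hf, hpos, rfl⟩ := hp
  refine ⟨fun S => t * l S, ⟨?_, ?_⟩, ?_, ?_⟩
  · apply Set.Finite.subset hf.1
    intro S hS
    simp only [Function.mem_support] at hS ⊢
    intro h; apply hS; rw [h]; ring
  · intro S hS
    simp only [Function.mem_support] at hS
    apply hf.2
    intro h; apply hS; rw [h]; ring
  · intro S hS
    exact mul_nonneg ht (hpos S hS)
  · unfold embK
    refine Prod.ext ?_ ?_
    · funext μ
      simp only [Prod.smul_fst, Pi.smul_apply, smul_eq_mul]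
      exact finsum_mul_smul t l μ.1 hf.1
    · simp only [Prod.smul_snd, smul_eq_mul]
      exact finsum_mul_smul t l v hf.1

lemma single_mem_coneK (𝒜' : Set (Set N)) (κ : Cardinal) (v : Set N → ℝ)
    (S : Set N) (hS : S ∈ 𝒜') (c : ℝ) (hc : 0 ≤ c ∨ S = Set.univ) :
    ((fun μ : BAk 𝒜' κ => c * μ.1 S), c * v S) ∈ coneK 𝒜' κ v := by
  classical
  refine ⟨fun T => if T = S then c else 0, ⟨?_, ?_⟩, ?_, ?_⟩
  · apply Set.Finite.subset (Set.finite_singleton S)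
    intro T hT
    simp only [Function.mem_support] at hT
    by_contra h
    simp only [Set.mem_singleton_iff] at h
    exact hT (if_neg h)
  · intro T hT
    simp only [Function.mem_support] at hT
    by_cases h : T = S
    · rw [h]; exact hS
    · exact absurd (if_neg h) hT
  · intro T hTu
    show (0:ℝ) ≤ if T = S then c else 0
    by_cases h : T = S
    · rcases hc with hc | hc
      · rw [if_pos h]; exact hc
      · exact absurd (h.trans hc) hTu
    · rw [if_neg h]
  · unfold embK
    refine Prod.ext ?_ ?_
    · funext μ
      exact finsum_mul_single S c μ.1
    · exact finsum_mul_single S c v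

end Cone
/-- Generalized Bondareva–Shapley Theorem: the κ-core of a game v on 𝒜' is nonempty iff
v is κ-balanced, i.e. z ≤ v(N) for every z with (χ_N, z) in the weak closure of the cone K_v
(closure described via nets; weak topology induced by ba^κ(𝒜), 𝒜 the field hull of 𝒜'). -/
theorem kappaCore_nonempty_iff_kappaBalanced {N : Type} [Nonempty N]
    (𝒜' : Set (Set N)) (h0 : ∅ ∈ 𝒜') (hU : Set.univ ∈ 𝒜')
    (κ : Cardinal) (hκ : Cardinal.aleph0 ≤ κ)
    (v : Set N → ℝ) (hv : v ∅ = 0) :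
    (∃ μ : Set N → ℝ, InBaKappa (FieldHull 𝒜') κ μ ∧ μ Set.univ = v Set.univ ∧
        ∀ S ∈ 𝒜', v S ≤ μ S)
    ↔
    (∀ z : ℝ,
      (∃ (I : Type) (_ : Preorder I) (_ : IsDirected I (· ≤ ·)) (_ : Nonempty I)
          (lam : I → Set N → ℝ),
        (∀ i, FinSuppOn 𝒜' (lam i)) ∧ (∀ i S, S ≠ Set.univ → 0 ≤ lam i S) ∧
        (∀ μ : Set N → ℝ, InBaKappa (FieldHull 𝒜') κ μ →
          Tendsto (fun i => ∑ᶠ S, lam i S * μ S) atTop (nhds (μ Set.univ))) ∧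
        Tendsto (fun i => ∑ᶠ S, lam i S * v S) atTop (nhds z)) → z ≤ v Set.univ) := by
  classical
  constructor
  · rintro ⟨μ, hba, hμU, hcore⟩ z ⟨I, pre, dir, ne, lam, hfin, hpos, hconv, hz⟩
    letI := pre; letI := dir; letI := ne
    have key : ∀ i, (∑ᶠ S, lam i S * v S) ≤ ∑ᶠ S, lam i S * μ S := by
      intro i
      have hsub : Function.support (lam i) ⊆ ↑(hfin i).1.toFinset := by
        intro S hS; exact (hfin i).1.mem_toFinset.2 hS
      rw [finsum_mul_eq_sum _ v hsub, finsum_mul_eq_sum _ μ hsub]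
      apply Finset.sum_le_sum
      intro S hS
      have hS𝒜 : S ∈ 𝒜' := (hfin i).2 ((hfin i).1.mem_toFinset.1 hS)
      by_cases hSu : S = Set.univ
      · subst hSu; rw [hμU]
      · exact mul_le_mul_of_nonneg_left (hcore S hS𝒜) (hpos i S hSu)
    have hle := le_of_tendsto_of_tendsto' hz (hconv μ hba) key
    rwa [hμU] at hle
  · intro hbal
    set p₀ : (BAk 𝒜' κ → ℝ) × ℝ := (fun μ => μ.1 Set.univ, v Set.univ + 1) with hp₀
    have hp₀not : p₀ ∉ closure (coneK 𝒜' κ v) := by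
      intro hmem
      set I : Type := DirIdx (𝓝 p₀) with hI
      have hpick : ∀ U : I, ∃ lam : Set N → ℝ, FinSuppOn 𝒜' lam ∧
          (∀ S, S ≠ Set.univ → 0 ≤ lam S) ∧ embK 𝒜' κ v lam ∈ U.carrier := by
        intro U
        obtain ⟨x, hxU, hxK⟩ := mem_closure_iff_nhds.1 hmem U.carrier U.mem_filter
        obtain ⟨lam, hl1, hl2, hl3⟩ := hxK
        exact ⟨lam, hl1, hl2, hl3 ▸ hxU⟩
      choose lam hlfin hlpos hlmem using hpick
      have htend : Tendsto (fun U : I => embK 𝒜' κ v (lam U)) atTop (𝓝 p₀) := by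
        rw [Filter.tendsto_def]
        intro V hV
        exact Filter.mem_of_superset (Filter.Ici_mem_atTop (⟨V, hV⟩ : I))
          (fun U hle => DirIdx.le_def.1 hle (hlmem U))
      have h1 : ∀ μ : Set N → ℝ, InBaKappa (FieldHull 𝒜') κ μ →
          Tendsto (fun U : I => ∑ᶠ S, lam U S * μ S) atTop (𝓝 (μ Set.univ)) := by
        intro μ hμ
        have hc : Continuous (fun p : (BAk 𝒜' κ → ℝ) × ℝ => p.1 ⟨μ, hμ⟩) :=
          (continuous_apply _).comp continuous_fst
        have hcomp := (hc.tendsto p₀).comp htend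
        simpa [embK, hp₀, Function.comp_def] using hcomp
      have h2 : Tendsto (fun U : I => ∑ᶠ S, lam U S * v S) atTop (𝓝 (v Set.univ + 1)) := by
        have hcomp := (continuous_snd.tendsto p₀).comp htend
        simpa [embK, hp₀, Function.comp_def] using hcomp
      have := hbal (v Set.univ + 1)
        ⟨I, inferInstance, inferInstance, inferInstance, lam, hlfin, hlpos, h1, h2⟩
      linarith
    obtain ⟨f, u, hfK, hfp⟩ := geometric_hahn_banach_closed_point
      ((coneK_convex 𝒜' κ v).closure) isClosed_closure hp₀not
    have hu : 0 < u := by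
      have hz := hfK 0 (subset_closure (zero_mem_coneK 𝒜' κ v))
      simpa using hz
    have hfle : ∀ p ∈ coneK 𝒜' κ v, f p ≤ 0 := by
      intro p hp
      by_contra hlt
      push_neg at hlt
      have ht : (0:ℝ) ≤ (u + 1) / f p := le_of_lt (div_pos (by linarith) hlt)
      have hs := hfK _ (subset_closure (coneK_smul 𝒜' κ v _ ht hp))
      rw [map_smul, smul_eq_mul, div_mul_cancel₀ _ (ne_of_gt hlt)] at hs
      linarith
    set G : (BAk 𝒜' κ → ℝ) →L[ℝ] ℝ := f.comp (ContinuousLinearMap.inl ℝ _ ℝ) with hG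
    set b : ℝ := f (0, 1) with hbdef
    have hsplit : ∀ (h : BAk 𝒜' κ → ℝ) (z : ℝ), f (h, z) = G h + z * b := by
      intro h z
      have e1 : ((h, z) : (BAk 𝒜' κ → ℝ) × ℝ) = (h, 0) + (0, z) := by
        rw [Prod.mk_add_mk, add_zero, zero_add]
      have e2 : ((0, z) : (BAk 𝒜' κ → ℝ) × ℝ) = z • ((0, 1) : (BAk 𝒜' κ → ℝ) × ℝ) := by
        rw [Prod.smul_mk, smul_zero, smul_eq_mul, mul_one]
      rw [e1, map_add, e2, map_smul, smul_eq_mul]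
      have : G h = f (h, 0) := by
        rw [hG]; rfl
      rw [this, mul_comm]
    obtain ⟨J, cf, hJ⟩ := clm_pi_repr G
    set ψ : Set N → ℝ := fun T => ∑ j ∈ J, cf j * j.1 T with hψ
    have hψba : InBaKappa (FieldHull 𝒜') κ ψ :=
      inBaKappa_sum J _ (fun j => j.1) (fun j _ => j.2)
    have hGeval : ∀ T : Set N, G (fun μ : BAk 𝒜' κ => μ.1 T) = ψ T := by
      intro T
      show G (fun μ : BAk 𝒜' κ => μ.1 T) = ∑ j ∈ J, cf j * j.1 T
      rw [hJ]
      apply Finset.sum_congr rfl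
      intro j _
      ring
    have hSle : ∀ S ∈ 𝒜', ψ S + v S * b ≤ 0 := by
      intro S hS
      have hmem := single_mem_coneK 𝒜' κ v S hS 1 (Or.inl zero_le_one)
      have hle := hfle _ hmem
      rw [hsplit] at hle
      have e1 : (fun μ : BAk 𝒜' κ => 1 * μ.1 S) = (fun μ : BAk 𝒜' κ => μ.1 S) := by
        funext μ; rw [one_mul]
      rw [e1, hGeval, one_mul] at hle
      exact hle
    have hUeq : ψ Set.univ + v Set.univ * b = 0 := by
      have hle1 := hSle Set.univ hU
      have hmem := single_mem_coneK 𝒜' κ v Set.univ hU (-1) (Or.inr rfl)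
      have hle2 := hfle _ hmem
      rw [hsplit] at hle2
      have e1 : (fun μ : BAk 𝒜' κ => (-1:ℝ) * μ.1 Set.univ)
          = -(fun μ : BAk 𝒜' κ => μ.1 Set.univ) := by
        funext μ; simp
      rw [e1, map_neg, hGeval] at hle2
      nlinarith
    have hbpos : 0 < b := by
      have hfp₀ : f p₀ = (ψ Set.univ + v Set.univ * b) + b := by
        rw [hp₀, hsplit, hGeval]; ring
      linarith [hfp]
    refine ⟨fun T => (-1/b) * ψ T, inBaKappa_const_mul _ hψba, ?_, ?_⟩
    · show (-1/b) * ψ Set.univ = v Set.univ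
      have hval : ψ Set.univ = -(v Set.univ * b) := by linarith
      rw [hval]
      field_simp
    · intro S hS
      show v S ≤ (-1/b) * ψ S
      have hle1 := hSle S hS
      rw [show (-1/b) * ψ S = -ψ S / b by ring, le_div_iff₀ hbpos]
      linarith
end

section
/- If the player set N is finite, the core of a TU game v on 𝒜′ ⊆ 𝒫(N) (with ∅, N ∈ 𝒜′) is nonempty if and only if v is balanced: for every λ : 𝒜′ → ℝ₊ with Σ_{S∈𝒜′} λ_S χ_S = χ_N one has Σ_{S∈𝒜′} λ_S v(S) ≤ v(N). -/
open Filter Topology Set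
open scoped Classical

section FarkasHelpers

open scoped RealInnerProductSpace

namespace BondarevaAux

variable {ι : Type} [Fintype ι] {E : Type} [AddCommGroup E] [Module ℝ E]

lemma cone_caratheodory (a : ι → E) (c : ι → ℝ) (hc : ∀ i, 0 ≤ c i) :
    ∃ d : ι → ℝ, (∀ i, 0 ≤ d i) ∧ (∑ i, d i • a i = ∑ i, c i • a i) ∧
      LinearIndependent ℝ (fun i : {i // d i ≠ 0} => a i) := by
  generalize hn : (Finset.univ.filter fun i => c i ≠ 0).card = n
  induction n using Nat.strong_induction_on generalizing c with
  | _ n IH =>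
  by_cases hli : LinearIndependent ℝ (fun i : {i // c i ≠ 0} => a i)
  · exact ⟨c, hc, rfl, hli⟩
  -- get a nontrivial relation among the support of c
  obtain ⟨g, hg0, j, hgj⟩ := Fintype.not_linearIndependent_iff.1 hli
  -- extend g to ι
  set g' : ι → ℝ := fun i => if h : c i ≠ 0 then g ⟨i, h⟩ else 0 with hg'
  have hgsum : ∑ i, g' i • a i = 0 := by
    rw [← Finset.sum_subset (Finset.subset_univ (Finset.univ.filter fun i => c i ≠ 0))
      (by intro x _ hx; simp only [Finset.mem_filter, Finset.mem_univ, true_and] at hx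
          simp [hg', hx])]
    rw [Finset.sum_subtype (p := fun i => c i ≠ 0) _ (by simp)]
    calc ∑ x : {i // c i ≠ 0}, g' x.1 • a x.1
        = ∑ x : {i // c i ≠ 0}, g x • a x.1 :=
          Finset.sum_congr rfl fun x _ => by rw [hg']; simp only [dif_pos x.2, Subtype.coe_eta]
      _ = 0 := hg0
  have hgsupp : ∀ i, c i = 0 → g' i = 0 := by
    intro i hi; simp [hg', hi]
  -- get a version with a positive entry
  obtain ⟨h, hhsum, hhsupp, i₁, hi₁⟩ :
      ∃ h : ι → ℝ, ∑ i, h i • a i = 0 ∧ (∀ i, c i = 0 → h i = 0) ∧ ∃ i, 0 < h i := by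
    rcases lt_or_ge 0 (g' j.1) with hpos | hnp
    · exact ⟨g', hgsum, hgsupp, j.1, hpos⟩
    · refine ⟨-g', by simpa using hgsum, fun i hi => by simp [hgsupp i hi], j.1, ?_⟩
      have : g' j.1 ≠ 0 := by simpa [hg', j.2] using hgj
      simp only [Pi.neg_apply, neg_pos]
      exact lt_of_le_of_ne hnp this
  -- minimize ratio over positive entries of h
  have hTne : (Finset.univ.filter fun i => 0 < h i).Nonempty :=
    ⟨i₁, by simp [hi₁]⟩
  obtain ⟨i₀, hi₀T, hi₀min⟩ := Finset.exists_min_image _ (fun i => c i / h i) hTne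
  have hi₀pos : 0 < h i₀ := by simpa using (Finset.mem_filter.1 hi₀T).2
  set t : ℝ := c i₀ / h i₀ with ht
  have ht0 : 0 ≤ t := div_nonneg (hc i₀) hi₀pos.le
  set d : ι → ℝ := fun i => c i - t * h i with hd
  have hd0 : ∀ i, 0 ≤ d i := by
    intro i
    rcases lt_or_ge 0 (h i) with hpi | hni
    · have := hi₀min i (by simp [hpi])
      have : t * h i ≤ c i := by
        rw [div_le_div_iff₀ hi₀pos hpi] at this
        calc t * h i = c i₀ / h i₀ * h i := rfl
          _ ≤ c i := by
            rw [div_mul_eq_mul_div, div_le_iff₀ hi₀pos]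
            linarith [this]
      simp [hd]; linarith
    · have : t * h i ≤ 0 := mul_nonpos_of_nonneg_of_nonpos ht0 hni
      simp [hd]; nlinarith [hc i]
  have hdsum : ∑ i, d i • a i = ∑ i, c i • a i := by
    simp only [hd, sub_smul, Finset.sum_sub_distrib, mul_smul]
    rw [← Finset.smul_sum, hhsum, smul_zero, sub_zero]
  have hdsupp : (Finset.univ.filter fun i => d i ≠ 0) ⊆
      (Finset.univ.filter fun i => c i ≠ 0).erase i₀ := by
    intro i hi
    simp only [Finset.mem_filter, Finset.mem_univ, true_and] at hi
    refine Finset.mem_erase.2 ⟨?_, ?_⟩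
    · rintro rfl
      apply hi
      rw [hd]; simp only [ht]
      field_simp
      ring
    · simp only [Finset.mem_filter, Finset.mem_univ, true_and]
      intro hci
      exact hi (by simp [hd, hhsupp i hci, hci])
  have hci₀ : c i₀ ≠ 0 ∨ True := Or.inr trivial
  have hmem : i₀ ∈ (Finset.univ.filter fun i => c i ≠ 0) := by
    simp only [Finset.mem_filter, Finset.mem_univ, true_and]
    intro hci
    exact absurd (hhsupp i₀ hci) (ne_of_gt hi₀pos)
  have hcard : (Finset.univ.filter fun i => d i ≠ 0).card < n := by
    calc (Finset.univ.filter fun i => d i ≠ 0).card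
        ≤ ((Finset.univ.filter fun i => c i ≠ 0).erase i₀).card := Finset.card_le_card hdsupp
      _ < (Finset.univ.filter fun i => c i ≠ 0).card := Finset.card_erase_lt_of_mem hmem
      _ = n := hn
  obtain ⟨d', h1, h2, h3⟩ := IH _ hcard d hd0 rfl
  exact ⟨d', h1, h2.trans hdsum, h3⟩


end BondarevaAux

namespace BondarevaAux

variable {ι : Type} [Fintype ι] {H : Type} [NormedAddCommGroup H]
  [InnerProductSpace ℝ H] [FiniteDimensional ℝ H]

lemma sum_subtype_set (s : Set ι) (f : ι → H) (hf : ∀ i, i ∉ s → f i = 0) :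
    ∑ i : s, f i.1 = ∑ i, f i := by
  rw [← Finset.sum_subtype (p := (· ∈ s)) (Finset.univ.filter (· ∈ s)) (by simp) f]
  exact Finset.sum_subset (Finset.subset_univ _)
    (by intro i _ hi; simp only [Finset.mem_filter, Finset.mem_univ, true_and] at hi
        exact hf i hi)

lemma fg_cone_closed (a : ι → H) :
    IsClosed {x : H | ∃ c : ι → ℝ, (∀ i, 0 ≤ c i) ∧ ∑ i, c i • a i = x} := by
  have key : {x : H | ∃ c : ι → ℝ, (∀ i, 0 ≤ c i) ∧ ∑ i, c i • a i = x} =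
      ⋃ s : {s : Set ι // LinearIndependent ℝ (fun i : s => a i)},
        (Fintype.linearCombination ℝ (fun i : s.1 => a i)) ''
          {c : s.1 → ℝ | ∀ i, 0 ≤ c i} := by
    ext x
    constructor
    · rintro ⟨c, hc, rfl⟩
      obtain ⟨d, hd0, hdsum, hdli⟩ := cone_caratheodory a c hc
      refine Set.mem_iUnion.2 ⟨⟨{i | d i ≠ 0}, hdli⟩, ⟨fun i => d i.1, fun i => hd0 i.1, ?_⟩⟩
      rw [Fintype.linearCombination_apply, ← hdsum]
      exact sum_subtype_set {i | d i ≠ 0} (fun i => d i • a i)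
        (fun i hi => by simp only [Set.mem_setOf_eq, not_not] at hi; simp [hi])
    · intro hx
      obtain ⟨⟨s, hs⟩, c, hc, rfl⟩ := Set.mem_iUnion.1 hx
      refine ⟨fun i => if h : i ∈ s then c ⟨i, h⟩ else 0, ?_, ?_⟩
      · intro i
        by_cases h : i ∈ s
        · simpa [h] using hc ⟨i, h⟩
        · simp [h]
      · rw [Fintype.linearCombination_apply]
        rw [← sum_subtype_set s (fun i => (if h : i ∈ s then c ⟨i, h⟩ else 0) • a i)
          (fun i hi => by simp [hi])]
        exact Finset.sum_congr rfl fun i _ => by simp [i.2]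
  rw [key]
  apply isClosed_iUnion_of_finite
  rintro ⟨s, hs⟩
  have hker : LinearMap.ker (Fintype.linearCombination ℝ (fun i : s => a i)) = ⊥ := by
    rw [LinearMap.ker_eq_bot']
    intro m hm
    rw [Fintype.linearCombination_apply] at hm
    exact funext (Fintype.linearIndependent_iff.1 hs m hm)
  have hemb := LinearMap.isClosedEmbedding_of_injective hker
  have hset : {c : s → ℝ | ∀ i, 0 ≤ c i} =
      ⋂ i : s, (fun c : s → ℝ => c i) ⁻¹' Set.Ici 0 := by
    ext c; simp [Set.mem_iInter]
  refine hemb.isClosedMap _ ?_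
  rw [hset]
  exact isClosed_iInter fun i => isClosed_Ici.preimage (continuous_apply i)

theorem farkas (a : ι → H) (b : H)
    (hb : ∀ y : H, (∀ i, 0 ≤ ⟪a i, y⟫) → 0 ≤ ⟪b, y⟫) :
    ∃ c : ι → ℝ, (∀ i, 0 ≤ c i) ∧ ∑ i, c i • a i = b := by
  set K : ConvexCone ℝ H :=
    { carrier := {x : H | ∃ c : ι → ℝ, (∀ i, 0 ≤ c i) ∧ ∑ i, c i • a i = x}
      smul_mem' := by
        rintro r hr x ⟨c, hc, rfl⟩
        exact ⟨r • c, fun i => mul_nonneg hr.le (hc i), by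
          simp [Finset.smul_sum, mul_smul]⟩
      add_mem' := by
        rintro x ⟨c, hc, rfl⟩ y ⟨c', hc', rfl⟩
        exact ⟨c + c', fun i => add_nonneg (hc i) (hc' i), by
          simp [add_smul, Finset.sum_add_distrib]⟩ } with hK
  by_contra hcon
  have hbK : b ∉ K := fun h => hcon h
  obtain ⟨y, hy1, hy2⟩ := ProperCone.hyperplane_separation'
    (⟨K.toPointedCone (.of_nonempty_of_isClosed ⟨0, ⟨0, fun i => le_refl 0, by simp⟩⟩
      (fg_cone_closed a)), fg_cone_closed a⟩ : ProperCone ℝ H) hbK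
  have hay : ∀ i, 0 ≤ ⟪a i, y⟫ := by
    intro i
    refine hy1 (a i) ⟨fun j => if j = i then 1 else 0, fun j => by positivity, ?_⟩
    simp [ite_smul]
  have := hb y hay
  linarith


end BondarevaAux

end FarkasHelpers

open scoped RealInnerProductSpace in
/-- Classical Bondareva–Shapley Theorem with restricted cooperation: for a finite player set,
the core is nonempty iff the game is balanced. -/
theorem bondareva_shapley_finite {N : Type} [Fintype N] [Nonempty N]
    (𝒜' : Set (Set N)) (h0 : ∅ ∈ 𝒜') (hU : Set.univ ∈ 𝒜')
    (v : Set N → ℝ) (hv : v ∅ = 0) :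
    (∃ x : N → ℝ, (∑ᶠ i, x i) = v Set.univ ∧ ∀ S ∈ 𝒜', v S ≤ ∑ᶠ i ∈ S, x i)
    ↔
    (∀ lam : Set N → ℝ, (∀ S, 0 ≤ lam S) → Function.support lam ⊆ 𝒜' →
      (∀ y : N, (∑ᶠ S, lam S * S.indicator (fun _ => (1:ℝ)) y) = 1) →
      (∑ᶠ S, lam S * v S) ≤ v Set.univ) := by
  classical
  have e1 : ∀ (S : Set N) (x : N → ℝ), (∑ᶠ i ∈ S, x i) = ∑ i, (if i ∈ S then x i else 0) := by
    intro S x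
    rw [finsum_mem_def, finsum_eq_sum_of_fintype]
    exact Finset.sum_congr rfl fun i _ => Set.indicator_apply S x i
  constructor
  · rintro ⟨x, hxsum, hxcore⟩ lam hlam0 hsupp hbal
    rw [finsum_eq_sum_of_fintype] at hxsum
    rw [finsum_eq_sum_of_fintype]
    have hbal' : ∀ i : N, ∑ S : Set N, lam S * (if i ∈ S then 1 else 0) = 1 := by
      intro i
      have h := hbal i
      rw [finsum_eq_sum_of_fintype] at h
      calc ∑ S : Set N, lam S * (if i ∈ S then 1 else 0)
          = ∑ S : Set N, lam S * S.indicator (fun _ => (1:ℝ)) i :=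
            Finset.sum_congr rfl fun S _ => by rw [Set.indicator_apply]
        _ = 1 := h
    have step1 : ∀ S : Set N, lam S * v S ≤ lam S * ∑ i, (if i ∈ S then x i else 0) := by
      intro S
      by_cases hS : lam S = 0
      · simp [hS]
      · have hSA : S ∈ 𝒜' := hsupp hS
        have := hxcore S hSA
        rw [e1 S x] at this
        exact mul_le_mul_of_nonneg_left this (hlam0 S)
    calc ∑ S : Set N, lam S * v S
        ≤ ∑ S : Set N, lam S * ∑ i, (if i ∈ S then x i else 0) :=
          Finset.sum_le_sum fun S _ => step1 S
      _ = ∑ S : Set N, ∑ i, x i * (lam S * (if i ∈ S then 1 else 0)) := by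
          refine Finset.sum_congr rfl fun S _ => ?_
          rw [Finset.mul_sum]
          refine Finset.sum_congr rfl fun i _ => ?_
          split_ifs <;> ring
      _ = ∑ i, x i * ∑ S : Set N, lam S * (if i ∈ S then 1 else 0) := by
          rw [Finset.sum_comm]
          exact Finset.sum_congr rfl fun i _ => by rw [Finset.mul_sum]
      _ = ∑ i, x i := by
          refine Finset.sum_congr rfl fun i _ => ?_
          rw [hbal' i, mul_one]
      _ = v Set.univ := hxsum
  · intro H
    have e1 : ∀ (S : Set N) (x : N → ℝ), (∑ᶠ i ∈ S, x i) = ∑ i, (if i ∈ S then x i else 0) := by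
      intro S x
      rw [finsum_mem_def, finsum_eq_sum_of_fintype]
      exact Finset.sum_congr rfl fun i _ => Set.indicator_apply S x i
    set col : N → Option (Set N) → ℝ :=
      fun i z => z.elim (-1) (fun S => if S ∈ 𝒜' ∧ i ∈ S then 1 else 0) with hcol
    set A : (N × Bool) ⊕ (Option (Set N)) → EuclideanSpace ℝ (Option (Set N)) :=
      fun j => WithLp.toLp 2 (Sum.elim (fun p z => (if p.2 then (1:ℝ) else -1) * col p.1 z)
        (fun z w => if w = z then (-1:ℝ) else 0) j) with hA
    set b : EuclideanSpace ℝ (Option (Set N)) :=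
      WithLp.toLp 2 (fun z => z.elim (-(v Set.univ)) (fun S => if S ∈ 𝒜' then v S else 0)) with hb
    have inner_eq : ∀ x y : EuclideanSpace ℝ (Option (Set N)), ⟪x, y⟫ = ∑ z, x z * y z :=
      fun x y => by simp [PiLp.inner_apply, RCLike.inner_apply, conj_trivial, mul_comm]
    have hAtrue : ∀ (i : N) z, A (Sum.inl (i, true)) z = col i z := fun i z => by simp [hA]
    have hAfalse : ∀ (i : N) z, A (Sum.inl (i, false)) z = -(col i z) := fun i z => by simp [hA]
    have hAinr : ∀ z w, A (Sum.inr z) w = if w = z then -1 else 0 := fun z w => by simp [hA]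
    have hcolnone : ∀ i, col i none = -1 := fun i => rfl
    have hcolsome : ∀ i S, col i (some S) = if S ∈ 𝒜' ∧ i ∈ S then 1 else 0 := fun i S => rfl
    have hbn : b none = -(v Set.univ) := rfl
    have hbs : ∀ S, b (some S) = if S ∈ 𝒜' then v S else 0 := fun S => rfl
    -- Farkas hypothesis
    have hfark : ∀ y : EuclideanSpace ℝ (Option (Set N)),
        (∀ j, 0 ≤ ⟪A j, y⟫) → 0 ≤ ⟪b, y⟫ := by
      intro y hy
      have h1 : ∀ z, y z ≤ 0 := by
        intro z
        have h := hy (Sum.inr z)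
        rw [inner_eq] at h
        have e : ∑ w, A (Sum.inr z) w * y w = -y z := by
          calc ∑ w, A (Sum.inr z) w * y w = ∑ w, (if w = z then -y w else 0) :=
                Finset.sum_congr rfl fun w _ => by rw [hAinr]; split_ifs <;> ring
            _ = -y z := by rw [Finset.sum_ite_eq']; simp
        rw [e] at h; linarith
      set lam0 : Set N → ℝ := fun S => -(y (some S)) with hlam0def
      set t : ℝ := -(y none) with htdef
      have hlam0nn : ∀ S, 0 ≤ lam0 S := fun S => neg_nonneg.2 (h1 (some S))
      have htnn : 0 ≤ t := neg_nonneg.2 (h1 none)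
      have hip : ∀ i : N, ⟪A (Sum.inl (i, true)), y⟫
          = -y none + ∑ S : Set N, (if S ∈ 𝒜' ∧ i ∈ S then (1:ℝ) else 0) * y (some S) := by
        intro i
        rw [inner_eq, Fintype.sum_option]
        have e0 : A (Sum.inl (i, true)) none * y none = -y none := by
          rw [hAtrue, hcolnone]; ring
        have es : ∑ S : Set N, A (Sum.inl (i, true)) (some S) * y (some S)
            = ∑ S : Set N, (if S ∈ 𝒜' ∧ i ∈ S then (1:ℝ) else 0) * y (some S) :=
          Finset.sum_congr rfl fun S _ => by rw [hAtrue, hcolsome]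
        rw [e0, es]
      have him : ∀ i : N, ⟪A (Sum.inl (i, false)), y⟫
          = y none - ∑ S : Set N, (if S ∈ 𝒜' ∧ i ∈ S then (1:ℝ) else 0) * y (some S) := by
        intro i
        rw [inner_eq, Fintype.sum_option]
        have e0 : A (Sum.inl (i, false)) none * y none = y none := by
          rw [hAfalse, hcolnone]; ring
        have es : ∑ S : Set N, A (Sum.inl (i, false)) (some S) * y (some S)
            = -∑ S : Set N, (if S ∈ 𝒜' ∧ i ∈ S then (1:ℝ) else 0) * y (some S) := by
          rw [← Finset.sum_neg_distrib]
          exact Finset.sum_congr rfl fun S _ => by rw [hAfalse, hcolsome]; ring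
        rw [e0, es]; ring
      have h2 : ∀ i : N, ∑ S : Set N, (if S ∈ 𝒜' ∧ i ∈ S then (1:ℝ) else 0) * y (some S)
          = y none := by
        intro i
        have hp := hy (Sum.inl (i, true)); rw [hip i] at hp
        have hm := hy (Sum.inl (i, false)); rw [him i] at hm
        linarith
      have h2' : ∀ i : N, ∑ S : Set N, (if S ∈ 𝒜' ∧ i ∈ S then (1:ℝ) else 0) * lam0 S = t := by
        intro i
        have e : ∑ S : Set N, (if S ∈ 𝒜' ∧ i ∈ S then (1:ℝ) else 0) * lam0 S
            = -∑ S : Set N, (if S ∈ 𝒜' ∧ i ∈ S then (1:ℝ) else 0) * y (some S) := by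
          rw [← Finset.sum_neg_distrib]
          exact Finset.sum_congr rfl fun S _ => by simp only [hlam0def]; ring
        rw [e, h2 i]
      -- main inequality
      have main : ∑ S : Set N, (if S ∈ 𝒜' then v S else 0) * lam0 S ≤ t * v Set.univ := by
        by_cases ht : t = 0
        · have hzero : ∀ S : Set N, S ∈ 𝒜' → S ≠ ∅ → lam0 S = 0 := by
            intro S hSA hSne
            obtain ⟨i, hi⟩ := Set.nonempty_iff_ne_empty.2 hSne
            have hsum := h2' i
            rw [ht] at hsum
            have := (Finset.sum_eq_zero_iff_of_nonneg (fun S _ => by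
              split_ifs with h
              · simpa using hlam0nn S
              · simp)).1 hsum S (Finset.mem_univ S)
            simpa [hSA, hi] using this
          have e : ∑ S : Set N, (if S ∈ 𝒜' then v S else 0) * lam0 S = 0 := by
            refine Finset.sum_eq_zero fun S _ => ?_
            by_cases hSA : S ∈ 𝒜'
            · by_cases hSe : S = ∅
              · simp [hSA, hSe, hv]
              · simp [hSA, hzero S hSA hSe]
            · simp [hSA]
          rw [e, ht]; simp
        · have htpos : 0 < t := lt_of_le_of_ne htnn (Ne.symm ht)
          set lam : Set N → ℝ := fun S => if S ∈ 𝒜' then lam0 S / t else 0 with hlamdef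
          have hcon := H lam
            (fun S => by
              simp only [hlamdef]
              split_ifs with h
              · exact div_nonneg (hlam0nn S) htnn
              · exact le_refl 0)
            (fun S hS => by
              by_contra hSA
              rw [Function.mem_support] at hS
              simp only [hlamdef] at hS
              exact hS (if_neg hSA))
            (by
              intro i
              rw [finsum_eq_sum_of_fintype]
              calc ∑ S : Set N, lam S * S.indicator (fun _ => (1:ℝ)) i
                  = ∑ S : Set N, ((if S ∈ 𝒜' ∧ i ∈ S then 1 else 0) * lam0 S) / t := by
                    refine Finset.sum_congr rfl fun S _ => ?_
                    simp only [hlamdef, Set.indicator_apply]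
                    by_cases hSA : S ∈ 𝒜' <;> by_cases hiS : i ∈ S <;>
                      simp [hSA, hiS] <;> ring
                _ = 1 := by rw [← Finset.sum_div, h2' i, div_self ht])
          rw [finsum_eq_sum_of_fintype] at hcon
          have e : ∑ S : Set N, (if S ∈ 𝒜' then v S else 0) * lam0 S
              = t * ∑ S : Set N, lam S * v S := by
            rw [Finset.mul_sum]
            refine Finset.sum_congr rfl fun S _ => ?_
            simp only [hlamdef]
            by_cases h : S ∈ 𝒜'
            · simp only [h, if_true]
              field_simp
            · simp [h]
          rw [e]
          exact mul_le_mul_of_nonneg_left hcon htnn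
      rw [inner_eq, Fintype.sum_option]
      have e2 : ∑ S : Set N, b (some S) * y (some S)
          = -∑ S : Set N, (if S ∈ 𝒜' then v S else 0) * lam0 S := by
        rw [← Finset.sum_neg_distrib]
        exact Finset.sum_congr rfl fun S _ => by rw [hbs]; simp only [hlam0def]; ring
      have e3 : b none * y none = t * v Set.univ := by rw [hbn]; simp only [htdef]; ring
      rw [e2, e3]
      linarith
    -- apply Farkas
    obtain ⟨c, hc0, hceq⟩ := BondarevaAux.farkas A b hfark
    set x : N → ℝ := fun i => c (Sum.inl (i, true)) - c (Sum.inl (i, false)) with hx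
    have coordEq : ∀ z, ∑ j, c j * A j z = b z := by
      intro z
      let ev : EuclideanSpace ℝ (Option (Set N)) →+ ℝ :=
        { toFun := fun w => w z, map_zero' := rfl, map_add' := fun _ _ => rfl }
      have h2 : ev (∑ j, c j • A j) = ∑ j, ev (c j • A j) := map_sum ev _ Finset.univ
      rw [hceq] at h2
      exact h2.symm
    have hS : ∀ S : Set N, (∑ i : N, x i * (if S ∈ 𝒜' ∧ i ∈ S then 1 else 0))
        - c (Sum.inr (some S)) = (if S ∈ 𝒜' then v S else 0) := by
      intro S
      have h := coordEq (some S)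
      rw [Fintype.sum_sum_type, Fintype.sum_prod_type] at h
      have p1 : ∑ i : N, ∑ bb : Bool, c (Sum.inl (i, bb)) * A (Sum.inl (i, bb)) (some S)
          = ∑ i : N, x i * (if S ∈ 𝒜' ∧ i ∈ S then 1 else 0) := by
        refine Finset.sum_congr rfl fun i _ => ?_
        rw [Fintype.sum_bool, hAtrue, hAfalse, hcolsome]
        simp only [hx]
        ring
      have p2 : ∑ w : Option (Set N),
          c (Sum.inr w) * A (Sum.inr w) (some S) = -c (Sum.inr (some S)) := by
        calc ∑ w : Option (Set N), c (Sum.inr w) * A (Sum.inr w) (some S)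
            = ∑ w : Option (Set N), (if (some S : Option (Set N)) = w then -c (Sum.inr w) else 0) :=
              Finset.sum_congr rfl fun w _ => by
                rw [hAinr]
                by_cases hw : (some S : Option (Set N)) = w
                · rw [← hw]; simp
                · simp [hw]
          _ = -c (Sum.inr (some S)) := by rw [Finset.sum_ite_eq]; simp
      rw [p1, p2] at h
      rw [sub_eq_add_neg, h, hbs]
    have hnone : (∑ i : N, x i) + c (Sum.inr none) = v Set.univ := by
      have h := coordEq none
      rw [Fintype.sum_sum_type, Fintype.sum_prod_type] at h
      have p1 : ∑ i : N, ∑ bb : Bool, c (Sum.inl (i, bb)) * A (Sum.inl (i, bb)) none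
          = -∑ i : N, x i := by
        rw [← Finset.sum_neg_distrib]
        refine Finset.sum_congr rfl fun i _ => ?_
        rw [Fintype.sum_bool, hAtrue, hAfalse, hcolnone]
        simp only [hx]
        ring
      have p2 : ∑ w : Option (Set N),
          c (Sum.inr w) * A (Sum.inr w) none = -c (Sum.inr none) := by
        calc ∑ w : Option (Set N), c (Sum.inr w) * A (Sum.inr w) none
            = ∑ w : Option (Set N), (if (none : Option (Set N)) = w then -c (Sum.inr w) else 0) :=
              Finset.sum_congr rfl fun w _ => by
                rw [hAinr]
                by_cases hw : (none : Option (Set N)) = w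
                · rw [← hw]; simp
                · simp [hw]
          _ = -c (Sum.inr none) := by rw [Finset.sum_ite_eq]; simp
      rw [p1, p2, hbn] at h
      linarith
    refine ⟨x, ?_, ?_⟩
    · rw [finsum_eq_sum_of_fintype]
      have h1 := hS Set.univ
      simp only [hU, if_true, Set.mem_univ, and_true, mul_one] at h1
      have h2 : 0 ≤ c (Sum.inr (none : Option (Set N))) := hc0 _
      have h3 : 0 ≤ c (Sum.inr (some Set.univ)) := hc0 _
      linarith
    · intro S hSA
      rw [e1 S x]
      have h1 := hS S
      rw [if_pos hSA] at h1
      have h2 : 0 ≤ c (Sum.inr (some S)) := hc0 _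
      have h4 : ∑ i : N, x i * (if S ∈ 𝒜' ∧ i ∈ S then 1 else 0)
          = ∑ i : N, (if i ∈ S then x i else 0) := by
        refine Finset.sum_congr rfl fun i _ => ?_
        by_cases hi : i ∈ S <;> simp [hi, hSA]
      rw [h4] at h1
      linarith
end

section
/- For the game v on 𝒫(ℕ) with v(S) = 1 if #(ℕ∖S) ≤ 1 and v(S) = 0 otherwise: for any n ≥ 0, any n₁ ≤ n, distinct sets S₀ = ℕ, S_i = ℕ∖{i} for i = 1,…,n₁, arbitrary sets S_{n₁+1},…,S_n with #(ℕ∖S_j) > 1, nonnegative weights λ_0,…,λ_n, any m ≥ 2 with m ≤ n₁, and ε > 0: if |Σ_{j : i∈S_j} λ_j − 1| < ε for i = 1,…,m and the sets S_i equal ℕ∖{i} for i ≤ m, then Σ_{j=0}^{n₁} λ_j < (m/(m−1))(1+ε). -/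
open Filter Topology Set
open scoped Classical

/-- The key combinatorial estimate of Example 5.2: under the stated conditions on the sets
S₀ = ℕ, Sᵢ = ℕ∖{i} (1 ≤ i ≤ n₁) and the remaining sets (whose complements have more than one
element), nonnegative weights satisfying the ε-balancing inequalities for i = 1,…,m satisfy
Σ_{j ≤ n₁} λ_j < (m/(m−1))(1+ε). -/
theorem exGame_combinatorial_estimate (n n₁ m : ℕ) (hn₁ : n₁ ≤ n)
    (hm2 : 2 ≤ m) (hmn : m ≤ n₁)
    (S : Fin (n + 1) → Set ℕ) (hS0 : S 0 = Set.univ)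
    (hSi : ∀ j : Fin (n + 1), 1 ≤ (j : ℕ) → (j : ℕ) ≤ n₁ → S j = ({(j : ℕ)} : Set ℕ)ᶜ)
    (hSbig : ∀ j : Fin (n + 1), n₁ < (j : ℕ) → ¬ ((S j)ᶜ).Subsingleton)
    (hdist : Function.Injective S)
    (lam : Fin (n + 1) → ℝ) (hlam : ∀ j, 0 ≤ lam j)
    (ε : ℝ) (hε : 0 < ε)
    (hineq : ∀ i : ℕ, 1 ≤ i → i ≤ m →
      |(∑ j : Fin (n + 1), if i ∈ S j then lam j else 0) - 1| < ε) :
    (∑ j : Fin (n + 1), if (j : ℕ) ≤ n₁ then lam j else 0) < ((m : ℝ) / ((m : ℝ) - 1)) * (1 + ε) := by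
  set T := ∑ j : Fin (n + 1), if (j : ℕ) ≤ n₁ then lam j else 0 with hT
  set idx : ℕ → Fin (n + 1) := fun i => ⟨min i n, by omega⟩ with hidx
  have hidxval : ∀ i : ℕ, i ≤ m → ((idx i : Fin (n+1)) : ℕ) = i := by
    intro i hi; simp [hidx]; omega
  have key : ∀ i ∈ Finset.Icc 1 m, T - lam (idx i) < 1 + ε := by
    intro i hi
    rw [Finset.mem_Icc] at hi
    have h3 : (∑ j : Fin (n + 1), if i ∈ S j then lam j else 0) < 1 + ε := by
      have := abs_lt.mp (hineq i hi.1 hi.2); linarith [this.2]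
    refine lt_of_le_of_lt ?_ h3
    have heq : T - lam (idx i) = ∑ j : Fin (n + 1),
        ((if (j : ℕ) ≤ n₁ then lam j else 0) - (if j = idx i then lam j else 0)) := by
      rw [Finset.sum_sub_distrib, Finset.sum_ite_eq' Finset.univ (idx i) lam]
      simp [hT]
    rw [heq]
    apply Finset.sum_le_sum
    intro j _
    by_cases hj : j = idx i
    · subst hj
      have : ((idx i : Fin (n+1)) : ℕ) ≤ n₁ := by rw [hidxval i hi.2]; omega
      rw [if_pos this, if_pos rfl, sub_self]
      split
      exacts [hlam _, le_rfl]
    · rw [if_neg hj, sub_zero]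
      by_cases hj1 : (j : ℕ) ≤ n₁
      · rw [if_pos hj1]
        have hiS : i ∈ S j := by
          rcases Nat.eq_zero_or_pos (j : ℕ) with h0 | h0
          · have : j = 0 := by ext; simpa using h0
            rw [this, hS0]; trivial
          · rw [hSi j h0 hj1]
            simp only [Set.mem_compl_iff, Set.mem_singleton_iff]
            intro hcon
            apply hj
            ext
            rw [hidxval i hi.2, ← hcon]
        rw [if_pos hiS]
      · rw [if_neg hj1]
        split <;> simp [hlam]
  have hsum := Finset.sum_lt_sum_of_nonempty
    (Finset.nonempty_Icc.mpr (by omega : 1 ≤ m)) key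
  have hcard : (Finset.Icc 1 m).card = m := by simp
  rw [Finset.sum_const, hcard, Finset.sum_sub_distrib, Finset.sum_const, hcard] at hsum
  -- hsum : m • T - ∑ i in Icc 1 m, lam (idx i) < m • (1 + ε)
  have hB : (∑ i ∈ Finset.Icc 1 m, lam (idx i)) ≤ T := by
    have hinj : Set.InjOn idx (Finset.Icc 1 m) := by
      intro a ha b hb hab
      rw [Finset.mem_coe, Finset.mem_Icc] at ha hb
      have := congrArg Fin.val hab
      rwa [hidxval a ha.2, hidxval b hb.2] at this
    rw [← Finset.sum_image (fun a ha b hb => hinj ha hb)]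
    have : ∀ j ∈ (Finset.Icc 1 m).image idx, lam j = if (j : ℕ) ≤ n₁ then lam j else 0 := by
      intro j hj
      rw [Finset.mem_image] at hj
      obtain ⟨a, ha, rfl⟩ := hj
      rw [Finset.mem_Icc] at ha
      rw [if_pos (by rw [hidxval a ha.2]; omega)]
    rw [Finset.sum_congr rfl this]
    apply Finset.sum_le_sum_of_subset_of_nonneg (Finset.subset_univ _)
    intro j _ _
    split <;> simp [hlam]
  have hm1 : (0:ℝ) < (m:ℝ) - 1 := by
    have : (2:ℝ) ≤ (m:ℝ) := by exact_mod_cast hm2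
    linarith
  rw [div_mul_eq_mul_div, lt_div_iff₀ hm1]
  simp only [nsmul_eq_mul] at hsum
  nlinarith [hsum, hB, hlam]
end
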